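/- Let k be a field of characteristic p > 0 and let k'/k be a finite field extension. Then the degree of imperfection of k' equals the degree of imperfection of k; that is, [k' : k'^p] = [k : k^p]. -/

import Mathlib

set_option autoImplicit false

universe u

/-- The subfield `K^p ⊆ K` of `p`-th powers. -/
def pPowSubfield (K : Type u) [Field K] (p : ℕ) : Subfield K :=
  Subfield.closure {x : K | ∃ y : K, y ^ p = x}

/-!
Inside `k'`, let `F` be the image of `k`. The Frobenius `φ` of `k'` is a field isomorphism
`k' ≃ k'^p` carrying `F` onto `F^p`, so `[k'^p : F^p] = [k' : F]`. Comparing the two towers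
`F^p ⊆ F ⊆ k'` and `F^p ⊆ k'^p ⊆ k'` gives `[F : F^p] [k' : F] = [k' : F] [k' : k'^p]`,
and the finite nonzero factor `[k' : F]` cancels.
-/

theorem pPowSubfield_eq_fieldRange_frobenius (K : Type*) [Field K] (p : ℕ) [ExpChar K p] :
    pPowSubfield K p = (frobenius K p).fieldRange := by
  rw [pPowSubfield, ← Subfield.closure_eq (frobenius K p).fieldRange]
  rfl

theorem RingHom.fieldRange_map_frobenius {K L : Type*} [Field K] [Field L] (f : K →+* L)
    (p : ℕ) [ExpChar K p] [ExpChar L p] :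
    f.fieldRange.map (frobenius L p) = (frobenius K p).fieldRange.map f := by
  rw [f.fieldRange_eq_map, (frobenius K p).fieldRange_eq_map, Subfield.map_map,
    Subfield.map_map, f.frobenius_comm]

theorem Subfield.map_le_fieldRange {K L : Type*} [Field K] [Field L] (f : K →+* L)
    (s : Subfield K) : s.map f ≤ f.fieldRange := by
  rintro _ ⟨x, -, rfl⟩
  exact ⟨x, rfl⟩

theorem Subfield.relrank_map_eq_rank_fieldRange {L : Type*} [Field L] (φ : L →+* L)
    {F : Subfield L} (hF : F.map φ ≤ F) [Module.Finite F L] :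
    (F.map φ).relrank F = Module.rank φ.fieldRange L := by
  have hrank : (F.map φ).relrank φ.fieldRange = Module.rank F L := by
    rw [φ.fieldRange_eq_map, relrank_map_map, relrank_top_right]
  have key := (relrank_mul_rank_top hF).trans (relrank_mul_rank_top (F.map_le_fieldRange φ)).symm
  rw [hrank, mul_comm, ← Module.finrank_eq_rank] at key
  exact (Cardinal.natCast_mul_inj Module.finrank_pos.ne').mp key

/-- the degree of imperfection is insensitive to finite field extensions:
if `k'/k` is a finite extension of fields of characteristic `p > 0`, then
`[k' : k'^p] = [k : k^p]`. -/
theorem rank_pPow_eq_of_finite (p : ℕ) (hp : p.Prime)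
    (k k' : Type u) [Field k] [Field k'] [CharP k p]
    [Algebra k k'] [FiniteDimensional k k'] :
    Module.rank (pPowSubfield k' p) k' = Module.rank (pPowSubfield k p) k := by
  have : Fact p.Prime := ⟨hp⟩
  have : ExpChar k' p := expChar_of_injective_algebraMap (algebraMap k k').injective p
  set f := algebraMap k k'
  have : Module.Finite f.fieldRange k' := by
    rw [← IntermediateField.bot_toSubfield]
    exact (inferInstance : Module.Finite (⊥ : IntermediateField k k') k')
  have hmap := f.fieldRange_map_frobenius p
  rw [pPowSubfield_eq_fieldRange_frobenius, pPowSubfield_eq_fieldRange_frobenius,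
    ← Subfield.relrank_map_eq_rank_fieldRange _ (hmap ▸ Subfield.map_le_fieldRange f _), hmap,
    f.fieldRange_eq_map, Subfield.relrank_map_map, Subfield.relrank_top_right]
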